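/- arXiv:2011.04457 — 6 statements merged into one kernel-verified Lean document; each statement's English description precedes it below -/
import Mathlib

section
/- For every binary matrix X ∈ {0,1}^{n×m} and every integer k ≥ 2, the optimal objective value of LP_exact is 0: every feasible solution has nonnegative objective value, and the assignment a_{iℓ} = b_{ℓj} = 1/2 for all i, ℓ, j, y_{iℓj} = 1/2 for (i,j) ∈ E and y_{iℓj} = 0 for (i,j) ∉ E, z_{ij} = 1 for (i,j) ∈ E and z_{ij} = 0 for (i,j) ∉ E, is a feasible solution with objective value 0. -/
/-- The McCormick envelope `MC(a,b) = {y : a + b − 1 ≤ y, y ≤ a, y ≤ b, 0 ≤ y}`. -/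
def MC (a b y : ℝ) : Prop := a + b - 1 ≤ y ∧ y ≤ a ∧ y ≤ b ∧ 0 ≤ y

/-- Feasibility for the LP relaxation `LP_exact` of the compact formulation. -/
def LPexactFeasible (n m k : ℕ)
    (a : Fin n → Fin k → ℝ) (b : Fin k → Fin m → ℝ)
    (y : Fin n → Fin k → Fin m → ℝ) (z : Fin n → Fin m → ℝ) : Prop :=
  (∀ i ℓ, a i ℓ ∈ Set.Icc (0 : ℝ) 1) ∧
  (∀ ℓ j, b ℓ j ∈ Set.Icc (0 : ℝ) 1) ∧
  (∀ i ℓ j, y i ℓ j ≤ z i j) ∧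
  (∀ i j, z i j ≤ ∑ ℓ, y i ℓ j) ∧
  (∀ i ℓ j, MC (a i ℓ) (b ℓ j) (y i ℓ j)) ∧
  (∀ i j, z i j ≤ 1)

/-- The objective of `LP_exact`: `Σ_{(i,j)∈E}(1 − z_{ij}) + Σ_{(i,j)∉E} z_{ij}`. -/
def LPexactObj (n m : ℕ) (X : Fin n → Fin m → ℕ) (z : Fin n → Fin m → ℝ) : ℝ :=
  (∑ p ∈ Finset.univ.filter (fun p : Fin n × Fin m => X p.1 p.2 = 1), (1 - z p.1 p.2)) +
  ∑ p ∈ Finset.univ.filter (fun p : Fin n × Fin m => X p.1 p.2 ≠ 1), z p.1 p.2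

theorem zpos_aux (n m k : ℕ) (a : Fin n → Fin k → ℝ) (b : Fin k → Fin m → ℝ)
    (y : Fin n → Fin k → Fin m → ℝ) (z : Fin n → Fin m → ℝ)
    (h : LPexactFeasible n m k a b y z) (hk : 2 ≤ k) (i : Fin n) (j : Fin m) :
    0 ≤ z i j := by
  obtain ⟨_, _, h3, _, h5, _⟩ := h
  have : (0 : ℕ) < k := by omega
  exact le_trans (h5 i ⟨0, this⟩ j).2.2.2 (h3 i ⟨0, this⟩ j)

theorem obj_nonneg (n m k : ℕ) (hk : 2 ≤ k) (X : Fin n → Fin m → ℕ)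
    (a : Fin n → Fin k → ℝ) (b : Fin k → Fin m → ℝ)
    (y : Fin n → Fin k → Fin m → ℝ) (z : Fin n → Fin m → ℝ)
    (h : LPexactFeasible n m k a b y z) : 0 ≤ LPexactObj n m X z := by
  have h6 := h.2.2.2.2.2
  apply add_nonneg
  · exact Finset.sum_nonneg fun p _ => by linarith [h6 p.1 p.2]
  · exact Finset.sum_nonneg fun p _ => zpos_aux n m k a b y z h hk p.1 p.2

theorem feas_half (n m k : ℕ) (hk : 2 ≤ k) (X : Fin n → Fin m → ℕ) :
    LPexactFeasible n m k (fun _ _ => 1 / 2) (fun _ _ => 1 / 2)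
      (fun i _ j => if X i j = 1 then 1 / 2 else 0)
      (fun i j => if X i j = 1 then 1 else 0) := by
  have hk2 : (2:ℝ) ≤ k := by exact_mod_cast hk
  refine ⟨fun i ℓ => ⟨by norm_num, by norm_num⟩, fun ℓ j => ⟨by norm_num, by norm_num⟩,
    fun i ℓ j => ?_, fun i j => ?_, fun i ℓ j => ?_, fun i j => ?_⟩ <;>
    simp only [MC] <;> by_cases hx : X i j = 1 <;>
    simp [hx, Finset.sum_const, Finset.card_univ, nsmul_eq_mul] <;> linarith

theorem obj_zero (n m : ℕ) (X : Fin n → Fin m → ℕ) :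
    LPexactObj n m X (fun i j => if X i j = 1 then 1 else 0) = 0 := by
  unfold LPexactObj
  rw [Finset.sum_eq_zero, Finset.sum_eq_zero, add_zero]
  · intro p hp
    simp only [Finset.mem_filter] at hp
    simp [hp.2]
  · intro p hp
    simp only [Finset.mem_filter] at hp
    simp [hp.2]

/-- For every binary matrix `X` and every `k ≥ 2`, the optimal value of
`LP_exact` is `0`: every feasible solution has nonnegative objective, and the assignment
`a = b = 1/2`, `y_{iℓj} = 1/2` on `E` and `0` off `E`, `z = 1` on `E` and `0` off `E`,
is feasible with objective value `0`. -/
theorem stmt_5 (n m k : ℕ) (hk : 2 ≤ k) (X : Fin n → Fin m → ℕ)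
    (hX : ∀ i j, X i j = 0 ∨ X i j = 1) :
    (∀ (a : Fin n → Fin k → ℝ) (b : Fin k → Fin m → ℝ)
        (y : Fin n → Fin k → Fin m → ℝ) (z : Fin n → Fin m → ℝ),
      LPexactFeasible n m k a b y z → 0 ≤ LPexactObj n m X z) ∧
    (LPexactFeasible n m k (fun _ _ => 1 / 2) (fun _ _ => 1 / 2)
        (fun i _ j => if X i j = 1 then 1 / 2 else 0)
        (fun i j => if X i j = 1 then 1 else 0) ∧
      LPexactObj n m X (fun i j => if X i j = 1 then 1 else 0) = 0) ∧
    sInf {v : ℝ | ∃ (a : Fin n → Fin k → ℝ) (b : Fin k → Fin m → ℝ)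
        (y : Fin n → Fin k → Fin m → ℝ) (z : Fin n → Fin m → ℝ),
      LPexactFeasible n m k a b y z ∧ v = LPexactObj n m X z} = 0 := by
  refine ⟨fun a b y z h => obj_nonneg n m k hk X a b y z h,
    ⟨feas_half n m k hk X, obj_zero n m X⟩, ?_⟩
  apply le_antisymm
  · apply csInf_le
    · exact ⟨0, fun v ⟨a, b, y, z, hfeas, hv⟩ => hv ▸ obj_nonneg n m k hk X a b y z hfeas⟩
    · exact ⟨_, _, _, _, feas_half n m k hk X, (obj_zero n m X).symm⟩
  · apply le_csInf
    · exact ⟨0, _, _, _, _, feas_half n m k hk X, (obj_zero n m X).symm⟩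
    · rintro v ⟨a, b, y, z, hfeas, rfl⟩
      exact obj_nonneg n m k hk X a b y z hfeas
end

section
/- Let X ∈ {0,1}^{n×m}, let S be an isolated set of ones of X, and let (i₁,j₁), (i₂,j₂) be two distinct members of S. If a ∈ {0,1}^n and b ∈ {0,1}^m are such that a bᵀ is entrywise at most X (i.e. a_i b_j ≤ x_{ij} for all i, j), then not both a_{i₁} b_{j₁} = 1 and a_{i₂} b_{j₂} = 1 can hold; that is, no rank-1 binary submatrix of X covers two distinct members of an isolated set of ones. -/
/-- `S` is an isolated set of ones of the binary matrix `X`: every member of `S` indexes a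
`1` of `X`, and any two distinct members `(i₁,j₁), (i₂,j₂) ∈ S` satisfy `i₁ ≠ i₂`,
`j₁ ≠ j₂` and `x_{i₁j₂} x_{i₂j₁} = 0`. -/
def IsIsolatedSet (n m : ℕ) (X : Fin n → Fin m → ℕ) (S : Set (Fin n × Fin m)) : Prop :=
  (∀ p ∈ S, X p.1 p.2 = 1) ∧
  ∀ p ∈ S, ∀ q ∈ S, p ≠ q →
    p.1 ≠ q.1 ∧ p.2 ≠ q.2 ∧ X p.1 q.2 * X q.1 p.2 = 0

/-- Let `X ∈ {0,1}^{n×m}`, `S` an isolated set of ones of `X`, and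
`(i₁,j₁), (i₂,j₂)` two distinct members of `S`. If `a ∈ {0,1}^n`, `b ∈ {0,1}^m` are such
that `a bᵀ` is entrywise at most `X`, then not both `a_{i₁} b_{j₁} = 1` and
`a_{i₂} b_{j₂} = 1` can hold: no rank-1 binary submatrix of `X` covers two distinct
members of an isolated set of ones. -/
theorem stmt_7 (n m : ℕ) (X : Fin n → Fin m → ℕ)
    (hX : ∀ i j, X i j = 0 ∨ X i j = 1)
    (S : Set (Fin n × Fin m)) (hS : IsIsolatedSet n m X S)
    (p₁ p₂ : Fin n × Fin m) (hp₁ : p₁ ∈ S) (hp₂ : p₂ ∈ S) (hne : p₁ ≠ p₂)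
    (a : Fin n → ℕ) (b : Fin m → ℕ)
    (ha : ∀ i, a i = 0 ∨ a i = 1) (hb : ∀ j, b j = 0 ∨ b j = 1)
    (hsub : ∀ i j, a i * b j ≤ X i j) :
    ¬(a p₁.1 * b p₁.2 = 1 ∧ a p₂.1 * b p₂.2 = 1) := by
  rintro ⟨h1, h2⟩
  have ha1 : a p₁.1 = 1 := by rcases ha p₁.1 with h|h <;> simp [h] at h1 ⊢
  have hb1 : b p₁.2 = 1 := by rcases hb p₁.2 with h|h <;> simp [h] at h1 ⊢
  have ha2 : a p₂.1 = 1 := by rcases ha p₂.1 with h|h <;> simp [h] at h2 ⊢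
  have hb2 : b p₂.2 = 1 := by rcases hb p₂.2 with h|h <;> simp [h] at h2 ⊢
  have hA : 1 ≤ X p₁.1 p₂.2 := by have := hsub p₁.1 p₂.2; rwa [ha1, hb2, one_mul] at this
  have hB : 1 ≤ X p₂.1 p₁.2 := by have := hsub p₂.1 p₁.2; rwa [ha2, hb1, one_mul] at this
  have h0 := (hS.2 p₁ hp₁ p₂ hp₂ hne).2.2
  have := Nat.mul_le_mul hA hB
  omega
end

section
/- For every binary matrix X ∈ {0,1}^{n×m} and every positive integer k, the optimal objective value of MLP_exact equals the optimal objective value of MLP(1/k). -/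
/-- The index set `E = {(i,j) : x_{ij} = 1}` of positive entries of `X`. -/
def Eset (n m : ℕ) (X : Fin n → Fin m → ℕ) : Finset (Fin n × Fin m) :=
  Finset.univ.filter fun p => X p.1 p.2 = 1

/-- The complement of `E`: indices `(i,j)` with `x_{ij} ≠ 1`. -/
def Ecomp (n m : ℕ) (X : Fin n → Fin m → ℕ) : Finset (Fin n × Fin m) :=
  Finset.univ.filter fun p => X p.1 p.2 ≠ 1

/-- The set `R = {a bᵀ : a ∈ {0,1}^n \ {0}, b ∈ {0,1}^m \ {0}}` of all nonzero
rank-1 binary `n×m` matrices, as a `Finset` (each pair of nonzero binary vectors is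
encoded by a pair of nonzero Boolean vectors). -/
def Rset (n m : ℕ) : Finset (Fin n → Fin m → ℕ) :=
  ((Finset.univ : Finset ((Fin n → Bool) × (Fin m → Bool))).filter
      fun p => p.1 ≠ (fun _ => false) ∧ p.2 ≠ (fun _ => false)).image
    fun p => fun i j => (if p.1 i then 1 else 0) * (if p.2 j then 1 else 0)
/-- Feasibility for the master LP relaxation `MLP_exact`: variables `ξ_{ij} ≥ 0` for
`(i,j) ∈ E`, `π_{ij} ∈ [0,1]` for `(i,j) ∉ E`, `q_Y ∈ [0,1]` for `Y ∈ R`, subject to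
`Σ_Y Y_{ij} q_Y + ξ_{ij} ≥ 1` for `(i,j) ∈ E`, `Σ_Y Y_{ij} q_Y ≤ k π_{ij}` for
`(i,j) ∉ E`, and `Σ_Y q_Y ≤ k`. -/
def MLPexactFeasible (n m k : ℕ) (X : Fin n → Fin m → ℕ)
    (ξ π : Fin n → Fin m → ℝ) (q : (Fin n → Fin m → ℕ) → ℝ) : Prop :=
  (∀ i j, X i j = 1 → 0 ≤ ξ i j) ∧
  (∀ i j, X i j ≠ 1 → π i j ∈ Set.Icc (0 : ℝ) 1) ∧
  (∀ Y ∈ Rset n m, q Y ∈ Set.Icc (0 : ℝ) 1) ∧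
  (∀ i j, X i j = 1 → 1 ≤ (∑ Y ∈ Rset n m, (Y i j : ℝ) * q Y) + ξ i j) ∧
  (∀ i j, X i j ≠ 1 → (∑ Y ∈ Rset n m, (Y i j : ℝ) * q Y) ≤ k * π i j) ∧
  (∑ Y ∈ Rset n m, q Y) ≤ k

/-- The objective of `MLP_exact`: `Σ_{(i,j)∈E} ξ_{ij} + Σ_{(i,j)∉E} π_{ij}`. -/
def MLPexactObj (n m : ℕ) (X : Fin n → Fin m → ℕ) (ξ π : Fin n → Fin m → ℝ) : ℝ :=
  (∑ p ∈ Eset n m X, ξ p.1 p.2) + ∑ p ∈ Ecomp n m X, π p.1 p.2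

/-- Feasibility for the master LP `MLP(ρ)`: variables `ξ_{ij} ≥ 0` for `(i,j) ∈ E` and
`q_Y ∈ [0,1]` for `Y ∈ R`, subject to `Σ_Y Y_{ij} q_Y + ξ_{ij} ≥ 1` for `(i,j) ∈ E`
and `Σ_Y q_Y ≤ k`. -/
def MLPrhoFeasible (n m k : ℕ) (X : Fin n → Fin m → ℕ)
    (ξ : Fin n → Fin m → ℝ) (q : (Fin n → Fin m → ℕ) → ℝ) : Prop :=
  (∀ i j, X i j = 1 → 0 ≤ ξ i j) ∧
  (∀ Y ∈ Rset n m, q Y ∈ Set.Icc (0 : ℝ) 1) ∧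
  (∀ i j, X i j = 1 → 1 ≤ (∑ Y ∈ Rset n m, (Y i j : ℝ) * q Y) + ξ i j) ∧
  (∑ Y ∈ Rset n m, q Y) ≤ k

/-- The objective of `MLP(ρ)`:
`Σ_{(i,j)∈E} ξ_{ij} + ρ Σ_{Y∈R} (Σ_{(i,j)∉E} Y_{ij}) q_Y`. -/
def MLPrhoObj (n m : ℕ) (X : Fin n → Fin m → ℕ) (ρ : ℝ)
    (ξ : Fin n → Fin m → ℝ) (q : (Fin n → Fin m → ℕ) → ℝ) : ℝ :=
  (∑ p ∈ Eset n m X, ξ p.1 p.2) +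
    ρ * ∑ Y ∈ Rset n m, (∑ p ∈ Ecomp n m X, (Y p.1 p.2 : ℝ)) * q Y

/-! Given feasible `(ξ, q)` for `MLP(1/k)`, the smallest admissible choice in `MLP_exact` is
`π_{ij} = c_{ij} / k` with coverage `c_{ij} = Σ_Y Y_{ij} q_Y`; it lies in `[0,1]` because
`c_{ij} ≤ Σ_Y q_Y ≤ k`. Exchanging the order of summation in the penalty of `MLP(1/k)`, that
penalty is `Σ_{(i,j)∉E} c_{ij} / k`, so the two objectives agree at this point, while any other
feasible `π` only increases the `MLP_exact` objective. Hence every value of either LP is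
dominated by a value of the other, and the infima coincide. -/

def coverage (n m : ℕ) (q : (Fin n → Fin m → ℕ) → ℝ) (i : Fin n) (j : Fin m) : ℝ :=
  ∑ Y ∈ Rset n m, (Y i j : ℝ) * q Y

lemma Rset_entry_le_one {n m : ℕ} {Y : Fin n → Fin m → ℕ} (hY : Y ∈ Rset n m)
    (i : Fin n) (j : Fin m) : Y i j ≤ 1 := by
  simp only [Rset, Finset.mem_image] at hY
  obtain ⟨p, -, rfl⟩ := hY
  dsimp only
  split_ifs <;> simp

section coverage

variable {n m : ℕ} {q : (Fin n → Fin m → ℕ) → ℝ}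

lemma coverage_nonneg (hq : ∀ Y ∈ Rset n m, q Y ∈ Set.Icc (0 : ℝ) 1)
    (i : Fin n) (j : Fin m) : 0 ≤ coverage n m q i j :=
  Finset.sum_nonneg fun Y hY => mul_nonneg (Nat.cast_nonneg _) (hq Y hY).1

lemma coverage_le_sum (hq : ∀ Y ∈ Rset n m, q Y ∈ Set.Icc (0 : ℝ) 1)
    (i : Fin n) (j : Fin m) : coverage n m q i j ≤ ∑ Y ∈ Rset n m, q Y :=
  Finset.sum_le_sum fun Y hY =>
    mul_le_of_le_one_left (hq Y hY).1 (by exact_mod_cast Rset_entry_le_one hY i j)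

lemma MLPrhoObj_eq_sum_coverage (X : Fin n → Fin m → ℕ) (ρ : ℝ) (ξ : Fin n → Fin m → ℝ) :
    MLPrhoObj n m X ρ ξ q =
      (∑ p ∈ Eset n m X, ξ p.1 p.2) + ρ * ∑ p ∈ Ecomp n m X, coverage n m q p.1 p.2 := by
  simp only [MLPrhoObj, coverage, Finset.sum_mul]
  rw [Finset.sum_comm]

end coverage

section change_of_variables

variable {n m k : ℕ} {X : Fin n → Fin m → ℕ} {ξ : Fin n → Fin m → ℝ}
  {q : (Fin n → Fin m → ℕ) → ℝ}

lemma MLPexactFeasible.mlpRhoFeasible {π : Fin n → Fin m → ℝ}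
    (h : MLPexactFeasible n m k X ξ π q) : MLPrhoFeasible n m k X ξ q :=
  let ⟨hξ, _, hq, hcov, _, hsum⟩ := h
  ⟨hξ, hq, hcov, hsum⟩

lemma MLPrhoObj_le_MLPexactObj (hk : 0 < k) {π : Fin n → Fin m → ℝ}
    (h : MLPexactFeasible n m k X ξ π q) :
    MLPrhoObj n m X (1 / k) ξ q ≤ MLPexactObj n m X ξ π := by
  obtain ⟨-, -, -, -, hπ, -⟩ := h
  rw [MLPrhoObj_eq_sum_coverage, MLPexactObj, Finset.mul_sum]
  gcongr with p hp
  rw [Ecomp, Finset.mem_filter] at hp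
  rw [one_div_mul_eq_div, div_le_iff₀' (by exact_mod_cast hk)]
  exact hπ _ _ hp.2

lemma MLPexactFeasible_coverage_div (hk : 0 < k) (h : MLPrhoFeasible n m k X ξ q) :
    MLPexactFeasible n m k X ξ (fun i j => coverage n m q i j / k) q := by
  obtain ⟨hξ, hq, hcov, hsum⟩ := h
  have hkR : (0 : ℝ) < k := by exact_mod_cast hk
  refine ⟨hξ, fun i j _ => ⟨?_, ?_⟩, hq, hcov, fun i j _ => ?_, hsum⟩
  · exact div_nonneg (coverage_nonneg hq i j) hkR.le
  · exact (div_le_one hkR).2 ((coverage_le_sum hq i j).trans hsum)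
  · exact (mul_div_cancel₀ _ hkR.ne').ge

lemma MLPexactObj_coverage_div :
    MLPexactObj n m X ξ (fun i j => coverage n m q i j / k) =
      MLPrhoObj n m X (1 / k) ξ q := by
  rw [MLPrhoObj_eq_sum_coverage, MLPexactObj, Finset.mul_sum]
  simp only [one_div_mul_eq_div]

end change_of_variables

theorem stmt_10_general (n m k : ℕ) (hk : 0 < k) (X : Fin n → Fin m → ℕ) :
    sInf {v : ℝ | ∃ (ξ π : Fin n → Fin m → ℝ) (q : (Fin n → Fin m → ℕ) → ℝ),
        MLPexactFeasible n m k X ξ π q ∧ v = MLPexactObj n m X ξ π} =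
      sInf {v : ℝ | ∃ (ξ : Fin n → Fin m → ℝ) (q : (Fin n → Fin m → ℕ) → ℝ),
        MLPrhoFeasible n m k X ξ q ∧ v = MLPrhoObj n m X (1 / k) ξ q} := by
  apply csInf_eq_csInf_of_forall_exists_le
  · rintro _ ⟨ξ, π, q, h, rfl⟩
    exact ⟨_, ⟨ξ, q, h.mlpRhoFeasible, rfl⟩, MLPrhoObj_le_MLPexactObj hk h⟩
  · rintro _ ⟨ξ, q, h, rfl⟩
    exact ⟨_, ⟨ξ, _, q, MLPexactFeasible_coverage_div hk h, rfl⟩,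
      MLPexactObj_coverage_div.le⟩

/-- For every binary matrix `X ∈ {0,1}^{n×m}` and every positive integer
`k`, the optimal objective value of `MLP_exact` equals the optimal objective value of
`MLP(1/k)`. -/
theorem stmt_10 (n m k : ℕ) (hk : 0 < k) (X : Fin n → Fin m → ℕ)
    (hX : ∀ i j, X i j = 0 ∨ X i j = 1) :
    sInf {v : ℝ | ∃ (ξ π : Fin n → Fin m → ℝ) (q : (Fin n → Fin m → ℕ) → ℝ),
        MLPexactFeasible n m k X ξ π q ∧ v = MLPexactObj n m X ξ π} =
      sInf {v : ℝ | ∃ (ξ : Fin n → Fin m → ℝ) (q : (Fin n → Fin m → ℕ) → ℝ),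
        MLPrhoFeasible n m k X ξ q ∧ v = MLPrhoObj n m X (1 / k) ξ q} :=
  stmt_10_general n m k hk X
end

section
/- (Weak duality / dual bound for column generation.) Let X ∈ {0,1}^{n×m}, k a positive integer, ρ > 0, p_{ij} ∈ [0,1] for (i,j) ∈ E, and μ ∈ ℝ with μ ≥ Σ_{(i,j)∈E} p_{ij} a_i b_j − ρ Σ_{(i,j)∉E} a_i b_j for all a ∈ {0,1}^n, b ∈ {0,1}^m. Then every feasible solution (ξ, q) of MLP(ρ) satisfies Σ_{(i,j)∈E} ξ_{ij} + ρ Σ_{Y∈R} (Σ_{(i,j)∉E} Y_{ij}) q_Y ≥ Σ_{(i,j)∈E} p_{ij} − k μ. -/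
/-- weak duality / dual bound for column generation: Let
`X ∈ {0,1}^{n×m}`, `k ≥ 1`, `ρ > 0`, `p_{ij} ∈ [0,1]` for `(i,j) ∈ E`, and `μ ∈ ℝ` with
`μ ≥ Σ_{(i,j)∈E} p_{ij} a_i b_j − ρ Σ_{(i,j)∉E} a_i b_j` for all binary vectors
`a ∈ {0,1}^n`, `b ∈ {0,1}^m`. Then every feasible solution `(ξ, q)` of `MLP(ρ)`
satisfies `Σ_{(i,j)∈E} ξ_{ij} + ρ Σ_{Y∈R} (Σ_{(i,j)∉E} Y_{ij}) q_Y ≥ Σ_{(i,j)∈E} p_{ij} − k μ`. -/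
theorem stmt_12 (n m k : ℕ) (hk : 0 < k) (X : Fin n → Fin m → ℕ)
    (hX : ∀ i j, X i j = 0 ∨ X i j = 1) (ρ : ℝ) (hρ : 0 < ρ)
    (p : Fin n → Fin m → ℝ) (hp : ∀ i j, X i j = 1 → p i j ∈ Set.Icc (0 : ℝ) 1)
    (μ : ℝ)
    (hμ : ∀ (a : Fin n → ℝ) (b : Fin m → ℝ),
      (∀ i, a i = 0 ∨ a i = 1) → (∀ j, b j = 0 ∨ b j = 1) →
      (∑ e ∈ Eset n m X, p e.1 e.2 * (a e.1 * b e.2)) -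
        ρ * ∑ e ∈ Ecomp n m X, a e.1 * b e.2 ≤ μ)
    (ξ : Fin n → Fin m → ℝ) (q : (Fin n → Fin m → ℕ) → ℝ)
    (hfeas : MLPrhoFeasible n m k X ξ q) :
    (∑ e ∈ Eset n m X, p e.1 e.2) - k * μ ≤ MLPrhoObj n m X ρ ξ q := by
  obtain ⟨hξ, hq, hcon, hsum⟩ := hfeas
  have hμ0 : 0 ≤ μ := by
    have := hμ (fun _ => 0) (fun _ => 0) (fun _ => Or.inl rfl) (fun _ => Or.inl rfl)
    simpa using this
  have hq0 : ∀ Y ∈ Rset n m, 0 ≤ q Y := fun Y h => (hq Y h).1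
  -- per-Y bound from the dual inequality
  have hYb : ∀ Y ∈ Rset n m,
      (∑ e ∈ Eset n m X, p e.1 e.2 * (Y e.1 e.2 : ℝ)) ≤
        μ + ρ * ∑ e ∈ Ecomp n m X, (Y e.1 e.2 : ℝ) := by
    intro Y hY
    simp only [Rset, Finset.mem_image, Finset.mem_filter] at hY
    obtain ⟨⟨A, B⟩, -, rfl⟩ := hY
    have key := hμ (fun i => if A i then 1 else 0) (fun j => if B j then 1 else 0)
      (fun i => by by_cases h : A i <;> simp [h]) (fun j => by by_cases h : B j <;> simp [h])
    have hc : ∀ (i : Fin n) (j : Fin m),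
        (((if A i then 1 else 0) * (if B j then 1 else 0) : ℕ) : ℝ)
        = (if A i then (1:ℝ) else 0) * (if B j then (1:ℝ) else 0) := by
      intro i j; split_ifs <;> norm_num
    simp only [hc]
    linarith
  -- per-e bound from constraints
  have h1 : ∀ e ∈ Eset n m X,
      p e.1 e.2 ≤ p e.1 e.2 * (∑ Y ∈ Rset n m, (Y e.1 e.2 : ℝ) * q Y) + ξ e.1 e.2 := by
    intro e he
    have hx : X e.1 e.2 = 1 := by simpa [Eset] using he
    have hpe := hp e.1 e.2 hx
    have hc := hcon e.1 e.2 hx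
    have hξe := hξ e.1 e.2 hx
    nlinarith [hpe.1, hpe.2]
  have h2 : ∑ e ∈ Eset n m X, p e.1 e.2 ≤
      (∑ e ∈ Eset n m X, ξ e.1 e.2) +
        ∑ Y ∈ Rset n m, (∑ e ∈ Eset n m X, p e.1 e.2 * (Y e.1 e.2 : ℝ)) * q Y := by
    calc ∑ e ∈ Eset n m X, p e.1 e.2
        ≤ ∑ e ∈ Eset n m X,
            (p e.1 e.2 * (∑ Y ∈ Rset n m, (Y e.1 e.2 : ℝ) * q Y) + ξ e.1 e.2) :=
          Finset.sum_le_sum h1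
      _ = (∑ e ∈ Eset n m X, ξ e.1 e.2) +
            ∑ Y ∈ Rset n m, (∑ e ∈ Eset n m X, p e.1 e.2 * (Y e.1 e.2 : ℝ)) * q Y := by
          rw [Finset.sum_add_distrib, add_comm]
          congr 1
          simp only [Finset.mul_sum]
          rw [Finset.sum_comm]
          simp only [Finset.sum_mul]
          exact Finset.sum_congr rfl fun Y _ => Finset.sum_congr rfl fun e _ => by ring
  have h3 : ∑ Y ∈ Rset n m, (∑ e ∈ Eset n m X, p e.1 e.2 * (Y e.1 e.2 : ℝ)) * q Y ≤
      ∑ Y ∈ Rset n m, (μ + ρ * ∑ e ∈ Ecomp n m X, (Y e.1 e.2 : ℝ)) * q Y := by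
    refine Finset.sum_le_sum fun Y hY => ?_
    exact mul_le_mul_of_nonneg_right (hYb Y hY) (hq0 Y hY)
  have h4 : ∑ Y ∈ Rset n m, (μ + ρ * ∑ e ∈ Ecomp n m X, (Y e.1 e.2 : ℝ)) * q Y
      = μ * (∑ Y ∈ Rset n m, q Y)
        + ρ * ∑ Y ∈ Rset n m, (∑ e ∈ Ecomp n m X, (Y e.1 e.2 : ℝ)) * q Y := by
    have e1 : ∑ Y ∈ Rset n m, μ * q Y = μ * ∑ Y ∈ Rset n m, q Y := (Finset.mul_sum _ _ _).symm
    have e2 : ∑ Y ∈ Rset n m, (ρ * ∑ e ∈ Ecomp n m X, (Y e.1 e.2 : ℝ)) * q Y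
        = ρ * ∑ Y ∈ Rset n m, (∑ e ∈ Ecomp n m X, (Y e.1 e.2 : ℝ)) * q Y := by
      rw [Finset.mul_sum]
      exact Finset.sum_congr rfl fun Y _ => by ring
    calc ∑ Y ∈ Rset n m, (μ + ρ * ∑ e ∈ Ecomp n m X, (Y e.1 e.2 : ℝ)) * q Y
        = ∑ Y ∈ Rset n m, (μ * q Y + (ρ * ∑ e ∈ Ecomp n m X, (Y e.1 e.2 : ℝ)) * q Y) :=
          Finset.sum_congr rfl fun Y _ => add_mul _ _ _
      _ = _ := by rw [Finset.sum_add_distrib, e1, e2]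
  have h5 : μ * (∑ Y ∈ Rset n m, q Y) ≤ μ * k := mul_le_mul_of_nonneg_left hsum hμ0
  unfold MLPrhoObj
  linarith
end

section
/- (Exactness of the master integer program.) For every binary matrix X ∈ {0,1}^{n×m} and every positive integer k, the minimum objective value of MIP_exact equals the minimum of ‖X − A∘B‖²_F = Σ_{i,j} (x_{ij} − (A∘B)_{ij})² over all A ∈ {0,1}^{n×k} and B ∈ {0,1}^{k×m}. -/
/-- Feasibility for the master integer program `MIP_exact`: as in `MLP_exact` but with
`π_{ij} ∈ {0,1}` for `(i,j) ∉ E` and `q_Y ∈ {0,1}` for `Y ∈ R`. -/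
def MIPexactFeasible (n m k : ℕ) (X : Fin n → Fin m → ℕ)
    (ξ π : Fin n → Fin m → ℝ) (q : (Fin n → Fin m → ℕ) → ℝ) : Prop :=
  MLPexactFeasible n m k X ξ π q ∧
  (∀ i j, X i j ≠ 1 → (π i j = 0 ∨ π i j = 1)) ∧
  (∀ Y ∈ Rset n m, q Y = 0 ∨ q Y = 1)

/-!
A feasible point of `MIP_exact` selects the set `F = {Y ∈ R : q_Y = 1}` of at most `k` nonzero
rank-one binary matrices. Their entrywise maximum `Z = F.sup id` is a Boolean product `A ∘ B`
with binary factors of inner dimension `k` (the columns of `A` and rows of `B` are the factors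
of the members of `F`, padded by zeros), and conversely every such product arises this way.
For a fixed `F`, the covering constraints force `ξ_ij ≥ 1 - Z_ij` on `E` and the packing
constraints force `π_ij ≥ Z_ij` off `E`; both bounds are attained by `ξ = 1 - Z`, `π = Z`.
So the best objective for `F` is `Σ_E (1 - Z) + Σ_{∉E} Z`, which for binary `X` and `Z` is
`‖X - Z‖²_F`.
-/

open Finset

theorem exists_fin_sup_eq_sup_id {α : Type*} [SemilatticeSup α] [OrderBot α]
    (F : Finset α) {k : ℕ} (hk : #F ≤ k) :
    ∃ Y : Fin k → α, (∀ ℓ, Y ℓ = ⊥ ∨ Y ℓ ∈ F) ∧ univ.sup Y = F.sup id := by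
  let Y : Fin k → α := fun ℓ => if h : (ℓ : ℕ) < #F then F.equivFin.symm ⟨ℓ, h⟩ else ⊥
  have hY : ∀ ℓ, Y ℓ = ⊥ ∨ Y ℓ ∈ F := fun ℓ => by
    by_cases h : (ℓ : ℕ) < #F <;> simp [Y, h]
  refine ⟨Y, hY, le_antisymm (Finset.sup_le fun ℓ _ => ?_) (Finset.sup_le fun x hx => ?_)⟩
  · rcases hY ℓ with h | h
    · exact h ▸ bot_le
    · exact le_sup (f := id) h
  · have : Y (Fin.castLE hk (F.equivFin ⟨x, hx⟩)) = x := by simp [Y]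
    rw [id, ← this]
    exact le_sup (mem_univ _)

section BooleanFactorization

variable {n m k : ℕ}

theorem mem_Rset_of_ne_zero {a : Fin n → ℕ} {b : Fin m → ℕ} (ha : ∀ i, a i ≤ 1)
    (hb : ∀ j, b j ≤ 1) (hab : (fun i j => a i * b j) ≠ 0) :
    (fun i j => a i * b j) ∈ Rset n m := by
  have ite_decide_eq : ∀ x : ℕ, x ≤ 1 → (if decide (x = 1) then 1 else 0) = x := fun x hx => by
    rcases Nat.le_one_iff_eq_zero_or_eq_one.1 hx with rfl | rfl <;> rfl
  simp only [Rset, mem_image, mem_filter, mem_univ, true_and]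
  refine ⟨(fun i => decide (a i = 1), fun j => decide (b j = 1)), ⟨?_, ?_⟩, ?_⟩
  · refine fun h => hab (funext fun i => funext fun j => ?_)
    have : a i ≠ 1 := by simpa using congrFun h i
    have : a i = 0 := by have := ha i; omega
    simp [this]
  · refine fun h => hab (funext fun i => funext fun j => ?_)
    have : b j ≠ 1 := by simpa using congrFun h j
    have : b j = 0 := by have := hb j; omega
    simp [this]
  · funext i j
    rw [ite_decide_eq _ (ha i), ite_decide_eq _ (hb j)]

theorem exists_eq_mul_of_mem_Rset {Y : Fin n → Fin m → ℕ} (hY : Y ∈ Rset n m) :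
    ∃ (a : Fin n → ℕ) (b : Fin m → ℕ), (∀ i, a i ≤ 1) ∧ (∀ j, b j ≤ 1) ∧
      (fun i j => a i * b j) = Y := by
  simp only [Rset, mem_image, mem_filter, mem_univ, true_and] at hY
  obtain ⟨⟨a, b⟩, -, rfl⟩ := hY
  exact ⟨fun i => if a i then 1 else 0, fun j => if b j then 1 else 0,
    fun i => by by_cases a i <;> simp [*], fun j => by by_cases b j <;> simp [*], rfl⟩

theorem le_one_of_mem_Rset {Y : Fin n → Fin m → ℕ} (hY : Y ∈ Rset n m) (i : Fin n)
    (j : Fin m) : Y i j ≤ 1 := by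
  obtain ⟨a, b, ha, hb, rfl⟩ := exists_eq_mul_of_mem_Rset hY
  exact Left.mul_le_one (ha i) (hb j)

def boolProd (A : Fin n → Fin k → ℕ) (B : Fin k → Fin m → ℕ) : Fin n → Fin m → ℕ :=
  fun i j => univ.sup fun ℓ => A i ℓ * B ℓ j

theorem boolProd_eq_sup (A : Fin n → Fin k → ℕ) (B : Fin k → Fin m → ℕ) :
    boolProd A B = univ.sup fun ℓ i j => A i ℓ * B ℓ j := by
  ext i j
  simp [boolProd, Finset.sup_apply]

theorem exists_boolProd_eq_sup {F : Finset (Fin n → Fin m → ℕ)} (hF : F ⊆ Rset n m)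
    (hk : #F ≤ k) :
    ∃ (A : Fin n → Fin k → ℕ) (B : Fin k → Fin m → ℕ), (∀ i ℓ, A i ℓ ≤ 1) ∧
      (∀ ℓ j, B ℓ j ≤ 1) ∧ boolProd A B = F.sup id := by
  obtain ⟨Y, hY, hsup⟩ := exists_fin_sup_eq_sup_id F hk
  have hfactor : ∀ ℓ, ∃ (a : Fin n → ℕ) (b : Fin m → ℕ), (∀ i, a i ≤ 1) ∧ (∀ j, b j ≤ 1) ∧
      (fun i j => a i * b j) = Y ℓ := fun ℓ => by
    rcases hY ℓ with h | h
    · exact ⟨0, 0, fun _ => zero_le_one, fun _ => zero_le_one, by rw [h]; rfl⟩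
    · exact exists_eq_mul_of_mem_Rset (hF h)
  choose a b ha hb hab using hfactor
  refine ⟨fun i ℓ => a ℓ i, b, fun i ℓ => ha ℓ i, hb, ?_⟩
  rw [boolProd_eq_sup, ← hsup]
  exact congrArg _ (funext hab)

theorem exists_subset_Rset_sup_eq_boolProd {A : Fin n → Fin k → ℕ} {B : Fin k → Fin m → ℕ}
    (hA : ∀ i ℓ, A i ℓ ≤ 1) (hB : ∀ ℓ j, B ℓ j ≤ 1) :
    ∃ F ⊆ Rset n m, #F ≤ k ∧ F.sup id = boolProd A B := by
  classical
  refine ⟨(univ.image fun ℓ i j => A i ℓ * B ℓ j).erase ⊥, fun Y hY => ?_, ?_, ?_⟩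
  · obtain ⟨hY0, hY⟩ := mem_erase.1 hY
    obtain ⟨ℓ, -, rfl⟩ := mem_image.1 hY
    exact mem_Rset_of_ne_zero (hA · ℓ) (hB ℓ) hY0
  · exact (card_erase_le.trans card_image_le).trans (card_univ.trans (Fintype.card_fin k)).le
  · rw [sup_erase_bot, sup_image, boolProd_eq_sup]
    rfl

end BooleanFactorization

theorem sum_mul_eq_sum_filter {α R : Type*} [NonAssocSemiring R] [DecidableEq R] {s : Finset α}
    {q : α → R} (hq : ∀ x ∈ s, q x = 0 ∨ q x = 1) (f : α → R) :
    ∑ x ∈ s, f x * q x = ∑ x ∈ s.filter (q · = 1), f x := by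
  rw [sum_filter]
  refine sum_congr rfl fun x hx => ?_
  rcases hq x hx with h | h
  · -- the leftover case `0 = 1` happens only in the zero ring
    simpa [h] using fun h01 => by rw [← mul_one (f x), ← h01, mul_zero]
  · simp [h]

section MasterProgram

variable {n m k : ℕ} {X : Fin n → Fin m → ℕ}

def frobDistSq (X Z : Fin n → Fin m → ℕ) : ℝ :=
  ∑ i, ∑ j, ((X i j : ℝ) - Z i j) ^ 2

theorem frobDistSq_eq (hX : ∀ i j, X i j = 0 ∨ X i j = 1) {Z : Fin n → Fin m → ℕ}
    (hZ : ∀ i j, Z i j ≤ 1) :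
    frobDistSq X Z =
      ∑ p ∈ Eset n m X, (1 - (Z p.1 p.2 : ℝ)) + ∑ p ∈ Ecomp n m X, (Z p.1 p.2 : ℝ) := by
  rw [frobDistSq, ← Fintype.sum_prod_type', Eset, Ecomp,
    ← sum_filter_add_sum_filter_not univ (fun p : Fin n × Fin m => X p.1 p.2 = 1)]
  congr 1 <;> refine sum_congr rfl fun p hp => ?_
  · rw [(mem_filter.1 hp).2]
    rcases Nat.le_one_iff_eq_zero_or_eq_one.1 (hZ p.1 p.2) with h | h <;> simp [h]
  · rw [(hX p.1 p.2).resolve_right (mem_filter.1 hp).2]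
    rcases Nat.le_one_iff_eq_zero_or_eq_one.1 (hZ p.1 p.2) with h | h <;> simp [h]

theorem sup_id_apply_le_sum (F : Finset (Fin n → Fin m → ℕ)) (i : Fin n) (j : Fin m) :
    F.sup id i j ≤ ∑ Y ∈ F, Y i j := by
  simp only [Finset.sup_apply, id]
  exact Finset.sup_le fun _ hY => single_le_sum (f := fun Y => Y i j) (fun _ _ => Nat.zero_le _) hY

theorem sum_le_card_mul_sup_id_apply (F : Finset (Fin n → Fin m → ℕ)) (i : Fin n) (j : Fin m) :
    ∑ Y ∈ F, Y i j ≤ #F * F.sup id i j :=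
  sum_le_card_nsmul F _ _ fun _ hY => le_sup (f := id) hY i j

theorem sup_id_apply_le_one {F : Finset (Fin n → Fin m → ℕ)} (hF : F ⊆ Rset n m) (i : Fin n)
    (j : Fin m) : F.sup id i j ≤ 1 :=
  (Finset.sup_le fun _ hY => le_one_of_mem_Rset (hF hY) : F.sup id ≤ fun _ _ => 1) i j

theorem exists_MIPexactFeasible_obj_eq (hX : ∀ i j, X i j = 0 ∨ X i j = 1)
    {F : Finset (Fin n → Fin m → ℕ)} (hF : F ⊆ Rset n m) (hk : #F ≤ k) :
    ∃ ξ π q, MIPexactFeasible n m k X ξ π q ∧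
      MLPexactObj n m X ξ π = frobDistSq X (F.sup id) := by
  classical
  set Z := F.sup id
  have hZ₁ : ∀ i j, Z i j ≤ 1 := sup_id_apply_le_one hF
  have hZ : ∀ i j, (Z i j : ℝ) ≤ 1 := fun i j => by exact_mod_cast hZ₁ i j
  let q : (Fin n → Fin m → ℕ) → ℝ := fun Y => if Y ∈ F then 1 else 0
  have hq : ∀ Y, q Y = 0 ∨ q Y = 1 := fun Y => by by_cases h : Y ∈ F <;> simp [q, h]
  have hload : ∀ i j, ∑ Y ∈ Rset n m, (Y i j : ℝ) * q Y = ∑ Y ∈ F, (Y i j : ℝ) := fun i j => by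
    simp only [q, mul_ite, mul_one, mul_zero, ← sum_filter, filter_mem_eq_inter,
      inter_eq_right.2 hF]
  refine ⟨fun i j => 1 - Z i j, fun i j => Z i j, q,
    ⟨⟨fun i j _ => sub_nonneg.2 (hZ i j), fun i j _ => ⟨Nat.cast_nonneg _, hZ i j⟩,
      fun Y _ => ?_, fun i j _ => ?_, fun i j _ => ?_, ?_⟩, fun i j _ => ?_, fun Y _ => hq Y⟩, ?_⟩
  · rcases hq Y with h | h <;> simp [h]
  · have : (Z i j : ℝ) ≤ ∑ Y ∈ F, (Y i j : ℝ) := by exact_mod_cast sup_id_apply_le_sum F i j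
    rw [hload]
    linarith
  · have : ∑ Y ∈ F, (Y i j : ℝ) ≤ #F * Z i j := by
      exact_mod_cast sum_le_card_mul_sup_id_apply F i j
    rw [hload]
    exact this.trans (mul_le_mul_of_nonneg_right (by exact_mod_cast hk) (Nat.cast_nonneg _))
  · simp only [q, sum_boole, filter_mem_eq_inter, inter_eq_right.2 hF]
    exact_mod_cast hk
  · show (Z i j : ℝ) = 0 ∨ (Z i j : ℝ) = 1
    exact_mod_cast Nat.le_one_iff_eq_zero_or_eq_one.1 (hZ₁ i j)
  · exact (frobDistSq_eq hX hZ₁).symm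

theorem exists_subset_Rset_frobDistSq_le (hX : ∀ i j, X i j = 0 ∨ X i j = 1)
    {ξ π : Fin n → Fin m → ℝ} {q : (Fin n → Fin m → ℕ) → ℝ}
    (h : MIPexactFeasible n m k X ξ π q) :
    ∃ F ⊆ Rset n m, #F ≤ k ∧ frobDistSq X (F.sup id) ≤ MLPexactObj n m X ξ π := by
  obtain ⟨⟨hξ, -, -, hcover, hpack, hbudget⟩, hπ, hq⟩ := h
  set F := (Rset n m).filter (q · = 1)
  have hF : F ⊆ Rset n m := filter_subset _ _
  have hload : ∀ i j, ∑ Y ∈ Rset n m, (Y i j : ℝ) * q Y = ∑ Y ∈ F, (Y i j : ℝ) :=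
    fun i j => sum_mul_eq_sum_filter hq _
  have hZ := sup_id_apply_le_one hF
  refine ⟨F, hF, ?_, ?_⟩
  · have : ∑ Y ∈ Rset n m, q Y = #F := by
      simpa using sum_mul_eq_sum_filter hq 1
    exact_mod_cast this ▸ hbudget
  rw [frobDistSq_eq hX hZ, MLPexactObj]
  gcongr with p hp p hp
  · have hXp : X p.1 p.2 = 1 := (mem_filter.1 hp).2
    have hcov := hload p.1 p.2 ▸ hcover p.1 p.2 hXp
    rcases Nat.le_one_iff_eq_zero_or_eq_one.1 (hZ p.1 p.2) with h | h
    · have : ∑ Y ∈ F, (Y p.1 p.2 : ℝ) ≤ 0 := by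
        exact_mod_cast h ▸ sum_le_card_mul_sup_id_apply F p.1 p.2
      simp only [h, Nat.cast_zero]
      linarith
    · simpa [h] using hξ p.1 p.2 hXp
  · have hXp : X p.1 p.2 ≠ 1 := (mem_filter.1 hp).2
    have : (F.sup id p.1 p.2 : ℝ) ≤ k * π p.1 p.2 :=
      (by exact_mod_cast sup_id_apply_le_sum F p.1 p.2 : (F.sup id p.1 p.2 : ℝ) ≤ _).trans
        (hload p.1 p.2 ▸ hpack p.1 p.2 hXp)
    rcases hπ p.1 p.2 hXp with h | h
    · simpa [h] using this
    · simpa [h] using hZ p.1 p.2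

end MasterProgram

theorem stmt_13_general (n m k : ℕ) (X : Fin n → Fin m → ℕ)
    (hX : ∀ i j, X i j = 0 ∨ X i j = 1) :
    sInf {v : ℝ | ∃ (ξ π : Fin n → Fin m → ℝ) (q : (Fin n → Fin m → ℕ) → ℝ),
        MIPexactFeasible n m k X ξ π q ∧ v = MLPexactObj n m X ξ π} =
      sInf {v : ℝ | ∃ (A : Fin n → Fin k → ℕ) (B : Fin k → Fin m → ℕ),
        (∀ i ℓ, A i ℓ = 0 ∨ A i ℓ = 1) ∧ (∀ ℓ j, B ℓ j = 0 ∨ B ℓ j = 1) ∧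
        v = ∑ i : Fin n, ∑ j : Fin m,
          ((X i j : ℝ) - ((Finset.univ.sup fun ℓ => A i ℓ * B ℓ j : ℕ) : ℝ)) ^ 2} := by
  refine csInf_eq_csInf_of_forall_exists_le ?_ ?_
  · rintro _ ⟨ξ, π, q, hfeas, rfl⟩
    obtain ⟨F, hFR, hFk, hle⟩ := exists_subset_Rset_frobDistSq_le hX hfeas
    obtain ⟨A, B, hA, hB, hAB⟩ := exists_boolProd_eq_sup hFR hFk
    refine ⟨frobDistSq X (boolProd A B), ⟨A, B, fun i ℓ => ?_, fun ℓ j => ?_, rfl⟩, hAB ▸ hle⟩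
    · exact Nat.le_one_iff_eq_zero_or_eq_one.1 (hA i ℓ)
    · exact Nat.le_one_iff_eq_zero_or_eq_one.1 (hB ℓ j)
  · rintro _ ⟨A, B, hA, hB, rfl⟩
    obtain ⟨F, hFR, hFk, hF⟩ := exists_subset_Rset_sup_eq_boolProd (k := k)
      (fun i ℓ => Nat.le_one_iff_eq_zero_or_eq_one.2 (hA i ℓ))
      (fun ℓ j => Nat.le_one_iff_eq_zero_or_eq_one.2 (hB ℓ j))
    obtain ⟨ξ, π, q, hfeas, hobj⟩ := exists_MIPexactFeasible_obj_eq hX hFR hFk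
    exact ⟨_, ⟨ξ, π, q, hfeas, rfl⟩, (hobj.trans (congrArg _ hF)).le⟩

/-- exactness of the master integer program: For every binary matrix
`X ∈ {0,1}^{n×m}` and every positive integer `k`, the minimum objective value of
`MIP_exact` equals the minimum of `‖X − A∘B‖²_F = Σ_{i,j} (x_{ij} − (A∘B)_{ij})²` over
all binary `A ∈ {0,1}^{n×k}`, `B ∈ {0,1}^{k×m}`, where
`(A∘B)_{ij} = max_ℓ a_{iℓ} b_{ℓj}` is the Boolean product. -/
theorem stmt_13 (n m k : ℕ) (hk : 0 < k) (X : Fin n → Fin m → ℕ)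
    (hX : ∀ i j, X i j = 0 ∨ X i j = 1) :
    sInf {v : ℝ | ∃ (ξ π : Fin n → Fin m → ℝ) (q : (Fin n → Fin m → ℕ) → ℝ),
        MIPexactFeasible n m k X ξ π q ∧ v = MLPexactObj n m X ξ π} =
      sInf {v : ℝ | ∃ (A : Fin n → Fin k → ℕ) (B : Fin k → Fin m → ℕ),
        (∀ i ℓ, A i ℓ = 0 ∨ A i ℓ = 1) ∧ (∀ ℓ j, B ℓ j = 0 ∨ B ℓ j = 1) ∧
        v = ∑ i : Fin n, ∑ j : Fin m,
          ((X i j : ℝ) - ((Finset.univ.sup fun ℓ => A i ℓ * B ℓ j : ℕ) : ℝ)) ^ 2} :=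
  stmt_13_general n m k X hX
end

section
/- (Exactness of the compact integer program.) For every binary matrix X ∈ {0,1}^{n×m} and every positive integer k, the minimum of the objective Σ_{(i,j)∈E}(1 − z_{ij}) + Σ_{(i,j)∉E} z_{ij} over feasible solutions of LP_exact in which additionally all a_{iℓ} and b_{ℓj} are required to lie in {0,1} equals the minimum of ‖X − A∘B‖²_F = Σ_{i,j} (x_{ij} − (A∘B)_{ij})² over all A ∈ {0,1}^{n×k} and B ∈ {0,1}^{k×m}. -/
lemma MC_binary {a b y : ℝ} (ha : a = 0 ∨ a = 1) (hb : b = 0 ∨ b = 1)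
    (h : MC a b y) : y = a * b := by
  obtain ⟨h1, h2, h3, h4⟩ := h
  rcases ha with ha | ha <;> rcases hb with hb | hb <;> subst ha <;> subst hb <;> linarith

lemma obj_eq_frob (n m : ℕ) (X : Fin n → Fin m → ℕ) (hX : ∀ i j, X i j = 0 ∨ X i j = 1)
    (z : Fin n → Fin m → ℝ) (hz : ∀ i j, z i j = 0 ∨ z i j = 1) :
    LPexactObj n m X z = ∑ i, ∑ j, ((X i j : ℝ) - z i j) ^ 2 := by
  rw [← Fintype.sum_prod_type']
  rw [← Finset.sum_filter_add_sum_filter_not Finset.univ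
      (fun p : Fin n × Fin m => X p.1 p.2 = 1)]
  unfold LPexactObj
  congr 1
  · apply Finset.sum_congr rfl
    intro p hp
    simp only [Finset.mem_filter] at hp
    rw [hp.2]
    rcases hz p.1 p.2 with h | h <;> rw [h] <;> norm_num
  · apply Finset.sum_congr rfl
    intro p hp
    simp only [Finset.mem_filter] at hp
    have hx0 : X p.1 p.2 = 0 := by
      rcases hX p.1 p.2 with h | h
      · exact h
      · exact absurd h hp.2
    rw [hx0]
    rcases hz p.1 p.2 with h | h <;> rw [h] <;> norm_num


/-- exactness of the compact integer program: For every binary matrix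
`X ∈ {0,1}^{n×m}` and every positive integer `k`, the minimum of the objective
`Σ_{(i,j)∈E}(1 − z_{ij}) + Σ_{(i,j)∉E} z_{ij}` over feasible solutions of `LP_exact` in
which additionally all `a_{iℓ}` and `b_{ℓj}` lie in `{0,1}` equals the minimum of
`‖X − A∘B‖²_F` over all binary `A ∈ {0,1}^{n×k}`, `B ∈ {0,1}^{k×m}`, where
`(A∘B)_{ij} = max_ℓ a_{iℓ} b_{ℓj}` is the Boolean product. -/
theorem stmt_14 (n m k : ℕ) (hk : 0 < k) (X : Fin n → Fin m → ℕ)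
    (hX : ∀ i j, X i j = 0 ∨ X i j = 1) :
    sInf {v : ℝ | ∃ (a : Fin n → Fin k → ℝ) (b : Fin k → Fin m → ℝ)
        (y : Fin n → Fin k → Fin m → ℝ) (z : Fin n → Fin m → ℝ),
      LPexactFeasible n m k a b y z ∧
      (∀ i ℓ, a i ℓ = 0 ∨ a i ℓ = 1) ∧ (∀ ℓ j, b ℓ j = 0 ∨ b ℓ j = 1) ∧
      v = LPexactObj n m X z} =
    sInf {v : ℝ | ∃ (A : Fin n → Fin k → ℕ) (B : Fin k → Fin m → ℕ),
      (∀ i ℓ, A i ℓ = 0 ∨ A i ℓ = 1) ∧ (∀ ℓ j, B ℓ j = 0 ∨ B ℓ j = 1) ∧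
      v = ∑ i : Fin n, ∑ j : Fin m,
        ((X i j : ℝ) - ((Finset.univ.sup fun ℓ => A i ℓ * B ℓ j : ℕ) : ℝ)) ^ 2} := by
  congr 1
  ext v
  constructor
  · rintro ⟨a, b, y, z, ⟨ha01, hb01, hyz, hzy, hMC, hz1⟩, haB, hbB, rfl⟩
    -- binary nat versions
    refine ⟨fun i ℓ => if a i ℓ = 1 then 1 else 0,
            fun ℓ j => if b ℓ j = 1 then 1 else 0, ?_, ?_, ?_⟩
    · intro i ℓ; dsimp only; split <;> simp
    · intro ℓ j; dsimp only; split <;> simp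
    · set A : Fin n → Fin k → ℕ := fun i ℓ => if a i ℓ = 1 then 1 else 0 with hA
      set B : Fin k → Fin m → ℕ := fun ℓ j => if b ℓ j = 1 then 1 else 0 with hB
      have haA : ∀ i ℓ, a i ℓ = (A i ℓ : ℝ) := by
        intro i ℓ; rcases haB i ℓ with h | h <;> simp [hA, h]
      have hbBr : ∀ ℓ j, b ℓ j = (B ℓ j : ℝ) := by
        intro ℓ j; rcases hbB ℓ j with h | h <;> simp [hB, h]
      have hy : ∀ i ℓ j, y i ℓ j = (A i ℓ * B ℓ j : ℕ) := by
        intro i ℓ j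
        have := MC_binary (haB i ℓ) (hbB ℓ j) (hMC i ℓ j)
        rw [this, haA i ℓ, hbBr ℓ j]; push_cast; ring
      have hAB01 : ∀ i ℓ j, A i ℓ * B ℓ j = 0 ∨ A i ℓ * B ℓ j = 1 := by
        intro i ℓ j; simp only [hA, hB]; split <;> split <;> simp
      have hzeq : ∀ i j, z i j = ((Finset.univ.sup fun ℓ => A i ℓ * B ℓ j : ℕ) : ℝ) := by
        intro i j
        rcases Nat.eq_zero_or_pos (Finset.univ.sup fun ℓ => A i ℓ * B ℓ j) with hs | hs
        · rw [hs]
          have hall : ∀ ℓ, A i ℓ * B ℓ j = 0 := by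
            intro ℓ
            have := Finset.le_sup (f := fun ℓ => A i ℓ * B ℓ j) (Finset.mem_univ ℓ)
            rw [hs] at this
            exact Nat.le_zero.mp this
          have h1 : z i j ≤ 0 := by
            calc z i j ≤ ∑ ℓ, y i ℓ j := hzy i j
            _ = 0 := by
              apply Finset.sum_eq_zero; intro ℓ _; rw [hy i ℓ j, hall ℓ]; simp
          have h2 : 0 ≤ z i j := by
            obtain ⟨ℓ0⟩ : Nonempty (Fin k) := ⟨⟨0, hk⟩⟩
            have := hyz i ℓ0 j
            rw [hy i ℓ0 j, hall ℓ0] at this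
            simpa using this
          push_cast; linarith
        · have hs1 : (Finset.univ.sup fun ℓ => A i ℓ * B ℓ j) = 1 := by
            have : (Finset.univ.sup fun ℓ => A i ℓ * B ℓ j) ≤ 1 := by
              apply Finset.sup_le; intro ℓ _; rcases hAB01 i ℓ j with h|h <;> omega
            omega
          rw [hs1]
          obtain ⟨ℓ0, _, hℓ0⟩ := Finset.exists_mem_eq_sup Finset.univ
            ⟨⟨0, hk⟩, Finset.mem_univ _⟩ (fun ℓ => A i ℓ * B ℓ j)
          have h1 : 1 ≤ z i j := by
            have := hyz i ℓ0 j
            rw [hy i ℓ0 j, ← hℓ0, hs1] at this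
            simpa using this
          have h2 := hz1 i j
          push_cast; linarith
      rw [obj_eq_frob n m X hX z (fun i j => by
        rw [hzeq i j]
        rcases Nat.eq_zero_or_pos (Finset.univ.sup fun ℓ => A i ℓ * B ℓ j) with h|h
        · left; rw [h]; norm_num
        · right
          have h1 : (Finset.univ.sup fun ℓ => A i ℓ * B ℓ j) = 1 := by
            have : (Finset.univ.sup fun ℓ => A i ℓ * B ℓ j) ≤ 1 := by
              apply Finset.sup_le; intro ℓ _; rcases hAB01 i ℓ j with h|h <;> omega
            omega
          rw [h1]; norm_num)]
      apply Finset.sum_congr rfl; intro i _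
      apply Finset.sum_congr rfl; intro j _
      rw [hzeq i j]
  · rintro ⟨A, B, hA01, hB01, rfl⟩
    have hAB01 : ∀ i ℓ j, A i ℓ * B ℓ j = 0 ∨ A i ℓ * B ℓ j = 1 := by
      intro i ℓ j; rcases hA01 i ℓ with h|h <;> rcases hB01 ℓ j with h'|h' <;> simp [h, h']
    have hsup01 : ∀ i j, (Finset.univ.sup fun ℓ => A i ℓ * B ℓ j) = 0 ∨
        (Finset.univ.sup fun ℓ => A i ℓ * B ℓ j) = 1 := by
      intro i j
      have : (Finset.univ.sup fun ℓ => A i ℓ * B ℓ j) ≤ 1 := by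
        apply Finset.sup_le; intro ℓ _; rcases hAB01 i ℓ j with h|h <;> omega
      omega
    refine ⟨fun i ℓ => (A i ℓ : ℝ), fun ℓ j => (B ℓ j : ℝ),
      fun i ℓ j => ((A i ℓ * B ℓ j : ℕ) : ℝ),
      fun i j => ((Finset.univ.sup fun ℓ => A i ℓ * B ℓ j : ℕ) : ℝ),
      ⟨?_, ?_, ?_, ?_, ?_, ?_⟩, ?_, ?_, ?_⟩
    · intro i ℓ; rcases hA01 i ℓ with h|h <;> simp [h]
    · intro ℓ j; rcases hB01 ℓ j with h|h <;> simp [h]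
    · intro i ℓ j
      dsimp only
      exact_mod_cast Nat.cast_le.mpr (Finset.le_sup (f := fun ℓ => A i ℓ * B ℓ j) (Finset.mem_univ ℓ))
    · intro i j
      dsimp only
      rw [← Nat.cast_sum]
      exact_mod_cast Finset.sup_le (fun ℓ _ => Finset.single_le_sum
        (f := fun ℓ => A i ℓ * B ℓ j) (fun _ _ => Nat.zero_le _) (Finset.mem_univ ℓ))
    · intro i ℓ j
      rcases hA01 i ℓ with h|h <;> rcases hB01 ℓ j with h'|h' <;>
        simp [MC, h, h']
    · intro i j
      dsimp only
      rcases hsup01 i j with h|h <;> rw [h] <;> norm_num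
    · intro i ℓ; rcases hA01 i ℓ with h|h <;> simp [h]
    · intro ℓ j; rcases hB01 ℓ j with h|h <;> simp [h]
    · rw [obj_eq_frob n m X hX _ (fun i j => by
        rcases hsup01 i j with h|h <;> rw [h] <;> norm_num)]
end
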